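/- arXiv:2506.14419 — 2 statements merged into one kernel-verified Lean document; each statement's English description precedes it below -/
import Mathlib

section
/- Let n ≥ 45 be an integer. For each integer a with ⌈(n+7)/5⌉ ≤ a ≤ ⌊(n−11)/3⌋ and n − a ≡ 1 (mod 2), set b = (n − 3a − 1)/2. Then for every integer c with b + 2 ≤ c ≤ a − 2, the integer (a choose 2) − c = a(a−1)/2 − c is an eigenvalue of the transposition graph Cay(S_n, T_n). -/
open Classical in
/-- The adjacency matrix of the transposition graph `Cay(S_n, T_n)`: vertices are the
permutations of `{1, ..., n}` (modelled as `Equiv.Perm (Fin n)`), and distinct `f, g`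
are adjacent iff `f * g⁻¹` is a transposition. -/
noncomputable def transpositionGraphAdjMatrix (n : ℕ) :
    Matrix (Equiv.Perm (Fin n)) (Equiv.Perm (Fin n)) ℝ :=
  fun f g => if f ≠ g ∧ (f * g⁻¹).IsSwap then 1 else 0

/-- An integer `m` is an eigenvalue of the transposition graph `Cay(S_n, T_n)` if it is an
eigenvalue of its adjacency matrix viewed as a matrix over `ℝ`. -/
def IsTranspositionGraphEigenvalue (n : ℕ) (m : ℤ) : Prop :=
  ∃ v : Equiv.Perm (Fin n) → ℝ, v ≠ 0 ∧
    (transpositionGraphAdjMatrix n).mulVec v = (m : ℝ) • v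

/-!
Every content sum `∑ (j - i)` over the cells `(i, j)` of a Young diagram `μ` with `n` cells is an
eigenvalue. Number the cells, let `R` and `C` be the row and column stabilisers and `e` the Young
symmetrizer `∑_{p ∈ R, q ∈ C} sign q • p q`, seen as a function on `S_n`. The transpositions form
a conjugacy class, so `Z v g = ∑_τ v (τ g)` preserves left `R`-invariance and right
`C`-sign-equivariance. By von Neumann's lemma every `g ∉ R C` satisfies `σ g = g τ` for some
transpositions `σ ∈ R`, `τ ∈ C`, which forces such functions to vanish off `R C`; so they are
multiples of `e`, and `Z e = λ e`. At `1`, `λ` counts the transpositions in `R` minus those in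
`C`, i.e. it is the content sum. Two diagrams made of four hooks have content sum
`(a choose 2) - c`.
-/

open Finset Equiv Equiv.Perm

namespace Equiv.Perm

variable {α : Type*} [DecidableEq α]

lemma IsSwap.conj {τ : Perm α} (h : τ.IsSwap) (σ : Perm α) : (σ * τ * σ⁻¹).IsSwap := by
  obtain ⟨x, y, hxy, rfl⟩ := h
  exact ⟨σ x, σ y, σ.injective.ne hxy, (swap_apply_apply σ x y).symm⟩

lemma isSwap_inv_iff {τ : Perm α} : τ⁻¹.IsSwap ↔ τ.IsSwap := by
  refine ⟨fun h => ?_, fun ⟨x, y, hxy, h⟩ => ⟨x, y, hxy, by rw [h, swap_inv]⟩⟩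
  obtain ⟨x, y, hxy, h⟩ := h
  exact ⟨x, y, hxy, by rw [← inv_inv τ, h, swap_inv]⟩

lemma IsSwap.ne_one {τ : Perm α} (h : τ.IsSwap) : τ ≠ 1 := by
  obtain ⟨x, y, hxy, rfl⟩ := h
  exact swap_eq_one_iff.not.mpr hxy

lemma eq_one_or_eq_swap_of_apply_eq_self {q : Perm α} {x y : α}
    (hfix : ∀ z, z ≠ x → z ≠ y → q z = z) : q = 1 ∨ q = swap x y := by
  have hx : q x = x ∨ q x = y := by
    by_contra! h
    exact h.1 (q.injective (hfix _ h.1 h.2))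
  have hy : q y = x ∨ q y = y := by
    by_contra! h
    exact h.2 (q.injective (hfix _ h.1 h.2))
  have hxy := q.injective.eq_iff (a := x) (b := y)
  rcases hx with hx | hx <;> [left; right] <;> ext z <;> by_cases hzx : z = x <;>
    by_cases hzy : z = y <;>
    grind [swap_apply_of_ne_of_ne, swap_apply_left, swap_apply_right, Perm.one_apply]

end Equiv.Perm

namespace TranspositionGraph

open scoped Pointwise

variable {α : Type*}

def fiberPreserving {β : Type*} (f : α → β) : Subgroup (Perm α) where
  carrier := {σ | ∀ x, f (σ x) = f x}
  one_mem' _ := rfl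
  mul_mem' hσ hτ x := (hσ _).trans (hτ x)
  inv_mem' {σ} hσ x := by simpa using (hσ (σ⁻¹ x)).symm

lemma swap_mem_fiberPreserving [DecidableEq α] {β : Type*} {f : α → β} {x y : α}
    (h : f x = f y) : swap x y ∈ fiberPreserving f := fun z => by
  rcases eq_or_ne z x with rfl | hzx
  · rw [swap_apply_left, h]
  rcases eq_or_ne z y with rfl | hzy
  · rw [swap_apply_right, h]
  · rw [swap_apply_of_ne_of_ne hzx hzy]

section Fintype

variable [Fintype α] [DecidableEq α]

open Classical in
noncomputable def transpositionSum (v : Perm α → ℝ) (g : Perm α) : ℝ :=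
  ∑ τ with τ.IsSwap, v (τ * g)

lemma transpositionSum_mul_left {v : Perm α → ℝ} {p : Perm α} (hv : ∀ g, v (p * g) = v g)
    (g : Perm α) : transpositionSum v (p * g) = transpositionSum v g := by
  refine Finset.sum_nbij' (fun τ => p⁻¹ * τ * p) (fun τ => p * τ * p⁻¹) ?_ ?_ ?_ ?_ ?_
  · simpa using fun τ hτ => hτ.conj p⁻¹
  · simpa using fun τ hτ => hτ.conj p
  · simp [mul_assoc]
  · simp [mul_assoc]
  · intro τ _
    rw [← hv (p⁻¹ * τ * p * g)]
    simp [mul_assoc]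

lemma transpositionSum_mul_right {v : Perm α → ℝ} {q : Perm α} {s : ℝ}
    (hv : ∀ g, v (g * q) = s * v g) (g : Perm α) :
    transpositionSum v (g * q) = s * transpositionSum v g := by
  simp only [transpositionSum, mul_sum, ← hv, mul_assoc]

section YoungSymmetrizer

open Classical in
/-- The coefficients of the Young symmetrizer `∑ p ∈ R, ∑ q ∈ C, sign q • (p * q)` of the group
algebra. -/
noncomputable def youngSymmetrizer (R C : Subgroup (Perm α)) (g : Perm α) : ℝ :=
  ∑ q : C, if g * (q : Perm α)⁻¹ ∈ R then ((sign (q : Perm α) : ℤ) : ℝ) else 0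

variable {R C : Subgroup (Perm α)}

lemma youngSymmetrizer_mul_left {p : Perm α} (hp : p ∈ R) (g : Perm α) :
    youngSymmetrizer R C (p * g) = youngSymmetrizer R C g := by
  classical
  unfold youngSymmetrizer
  refine sum_congr rfl fun q _ => ?_
  rw [mul_assoc, if_congr (Subgroup.mul_mem_cancel_left R hp) rfl rfl]

lemma youngSymmetrizer_mul_right {q : Perm α} (hq : q ∈ C) (g : Perm α) :
    youngSymmetrizer R C (g * q) = sign q * youngSymmetrizer R C g := by
  classical
  rw [youngSymmetrizer, youngSymmetrizer, mul_sum]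
  refine Fintype.sum_equiv (Equiv.mulRight ⟨q, hq⟩⁻¹) _ _ fun q' => ?_
  have hsq : ((sign q : ℤ) : ℝ) * (sign q : ℤ) = 1 := by
    rw [← Int.cast_mul, ← Units.val_mul, Int.units_mul_self, Units.val_one, Int.cast_one]
  simp only [Equiv.coe_mulRight, Subgroup.coe_mul, InvMemClass.coe_inv, mul_inv_rev, inv_inv,
    Perm.sign_mul, Perm.sign_inv, Units.val_mul, Int.cast_mul, mul_ite, mul_zero]
  rw [mul_left_comm, hsq, mul_one, mul_assoc]

lemma youngSymmetrizer_one (hRC : Disjoint R C) : youngSymmetrizer R C 1 = 1 := by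
  classical
  rw [youngSymmetrizer, Fintype.sum_eq_single 1]
  · simp
  · refine fun q hq => if_neg fun hqR => hq (Subtype.ext ?_)
    rw [one_mul, inv_mem_iff] at hqR
    exact Subgroup.disjoint_def.mp hRC hqR q.2

lemma youngSymmetrizer_mul (hRC : Disjoint R C) {p q : Perm α} (hp : p ∈ R) (hq : q ∈ C) :
    youngSymmetrizer R C (p * q) = sign q := by
  rw [youngSymmetrizer_mul_left hp, ← one_mul q, youngSymmetrizer_mul_right hq,
    youngSymmetrizer_one hRC, mul_one, one_mul]

lemma youngSymmetrizer_eq_zero {g : Perm α} (hg : g ∉ (R : Set (Perm α)) * (C : Set (Perm α))) :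
    youngSymmetrizer R C g = 0 := by
  refine sum_eq_zero fun q _ => if_neg fun hgq => hg ?_
  exact Set.mem_mul.mpr ⟨_, hgq, q, q.2, by simp⟩

theorem eq_smul_youngSymmetrizer (hRC : Disjoint R C) {φ : Perm α → ℝ}
    (hR : ∀ p ∈ R, ∀ g, φ (p * g) = φ g) (hC : ∀ q ∈ C, ∀ g, φ (g * q) = sign q * φ g)
    (hsep : ∀ g ∉ (R : Set (Perm α)) * (C : Set (Perm α)),
      ∃ σ ∈ R, ∃ τ ∈ C, τ.IsSwap ∧ σ * g = g * τ) :
    φ = φ 1 • youngSymmetrizer R C := by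
  funext g
  by_cases hg : g ∈ (R : Set (Perm α)) * (C : Set (Perm α))
  · obtain ⟨p, hp, q, hq, rfl⟩ := Set.mem_mul.mp hg
    have hφq : φ q = sign q * φ 1 := by simpa using hC q hq 1
    rw [Pi.smul_apply, youngSymmetrizer_mul hRC hp hq, hR p hp, hφq, smul_eq_mul, mul_comm]
  · obtain ⟨σ, hσ, τ, hτ, hτswap, hστ⟩ := hsep g hg
    have hφg : φ g = -φ g := calc
      φ g = φ (g * τ) := by rw [← hστ, hR σ hσ]
      _ = -φ g := by simp [hC τ hτ, hτswap.sign_eq]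
    rw [Pi.smul_apply, youngSymmetrizer_eq_zero hg, smul_zero]
    linarith

theorem transpositionSum_youngSymmetrizer (hRC : Disjoint R C)
    (hsep : ∀ g ∉ (R : Set (Perm α)) * (C : Set (Perm α)),
      ∃ σ ∈ R, ∃ τ ∈ C, τ.IsSwap ∧ σ * g = g * τ) :
    transpositionSum (youngSymmetrizer R C) =
      transpositionSum (youngSymmetrizer R C) 1 • youngSymmetrizer R C :=
  eq_smul_youngSymmetrizer hRC
    (fun _ hp => transpositionSum_mul_left (youngSymmetrizer_mul_left hp))
    (fun _ hq => transpositionSum_mul_right (youngSymmetrizer_mul_right hq)) hsep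

lemma youngSymmetrizer_of_isSwap (hRC : Disjoint R C)
    (hswap : ∀ p ∈ R, ∀ q ∈ C, (p * q).IsSwap → p = 1 ∨ q = 1) {τ : Perm α}
    (hτ : τ.IsSwap) [Decidable (τ ∈ R)] [Decidable (τ ∈ C)] :
    youngSymmetrizer R C τ = (if τ ∈ R then 1 else 0) - (if τ ∈ C then 1 else 0) := by
  by_cases hτR : τ ∈ R
  · have hτC : τ ∉ C := fun hτC => hτ.ne_one (Subgroup.disjoint_def.mp hRC hτR hτC)
    simpa [hτR, hτC] using youngSymmetrizer_mul hRC hτR C.one_mem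
  by_cases hτC : τ ∈ C
  · simpa [hτR, hτC, hτ.sign_eq] using youngSymmetrizer_mul hRC R.one_mem hτC
  rw [if_neg hτR, if_neg hτC, youngSymmetrizer_eq_zero, sub_zero]
  rintro ⟨p, hp, q, hq, rfl⟩
  rcases hswap p hp q hq hτ with rfl | rfl
  · exact hτC (by simpa using hq)
  · exact hτR (by simpa using hp)

open Classical in
theorem transpositionSum_youngSymmetrizer_one (hRC : Disjoint R C)
    (hswap : ∀ p ∈ R, ∀ q ∈ C, (p * q).IsSwap → p = 1 ∨ q = 1) :
    transpositionSum (youngSymmetrizer R C) 1 =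
      (#{τ | τ.IsSwap ∧ τ ∈ R} : ℝ) - #{τ | τ.IsSwap ∧ τ ∈ C} := by
  rw [transpositionSum, sum_congr rfl fun τ hτ => by
    rw [mul_one, youngSymmetrizer_of_isSwap hRC hswap (mem_filter.mp hτ).2], sum_sub_distrib,
    sum_boole, sum_boole, filter_filter, filter_filter]

end YoungSymmetrizer

open Classical in
lemma card_isSwap_mem_fiberPreserving_eq_card_pairs {f g : α → ℕ}
    (hinj : ∀ x y, f x = f y → g x = g y → x = y) :
    #{τ : Perm α | τ.IsSwap ∧ τ ∈ fiberPreserving f} =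
      #{z : α × α | f z.2 = f z.1 ∧ g z.2 < g z.1} := by
  symm
  refine card_nbij (fun z => swap z.1 z.2) (fun z hz => ?_) (fun z hz w hw hzw => ?_)
    (fun τ hτ => ?_)
  · simp only [coe_filter, mem_univ, true_and, Set.mem_ofPred_eq] at hz ⊢
    exact ⟨⟨z.1, z.2, fun h => hz.2.ne' (h ▸ rfl), rfl⟩, swap_mem_fiberPreserving hz.1.symm⟩
  · simp only [coe_filter, mem_univ, true_and, Set.mem_ofPred_eq] at hz hw
    have := congrArg (· z.1) hzw
    simp only [swap_apply_left, swap_apply_def] at this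
    grind
  · simp only [coe_filter, mem_univ, true_and, Set.mem_ofPred_eq] at hτ
    obtain ⟨⟨x, y, hxy, rfl⟩, hτ⟩ := hτ
    have hfxy : f x = f y := by simpa using (hτ x).symm
    have hgxy : g x ≠ g y := fun h => hxy (hinj x y hfxy h)
    rcases hgxy.lt_or_gt with h | h
    · exact ⟨(y, x), by simp [hfxy, h], swap_comm y x⟩
    · exact ⟨(x, y), by simp [hfxy, h], rfl⟩

open Classical in
lemma card_isSwap_mem_fiberPreserving {f g : α → ℕ}
    (hinj : ∀ x y, f x = f y → g x = g y → x = y)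
    (hdown : ∀ x, ∀ j < g x, ∃ y, f y = f x ∧ g y = j) :
    #{τ : Perm α | τ.IsSwap ∧ τ ∈ fiberPreserving f} = ∑ x, g x := by
  rw [card_isSwap_mem_fiberPreserving_eq_card_pairs hinj, card_filter, Fintype.sum_prod_type]
  refine sum_congr rfl fun x _ => ?_
  rw [← card_filter, ← card_range (g x)]
  refine card_nbij g (fun y hy => ?_) (fun y hy y' hy' h => ?_) (fun j hj => ?_)
  · simpa using (mem_filter.mp hy).2.2
  · simp only [coe_filter, mem_univ, true_and, Set.mem_ofPred_eq] at hy hy'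
    exact hinj y y' (hy.1.trans hy'.1.symm) h
  · obtain ⟨y, hy, rfl⟩ := hdown x j (by simpa using hj)
    exact ⟨y, by simp [hy, (by simpa using hj : g y < g x)], rfl⟩

end Fintype

lemma transpositionGraphAdjMatrix_mulVec {n : ℕ} (v : Perm (Fin n) → ℝ) :
    (transpositionGraphAdjMatrix n).mulVec v = transpositionSum v := by
  funext f
  simp only [Matrix.mulVec, dotProduct, transpositionGraphAdjMatrix, transpositionSum, ite_mul,
    one_mul, zero_mul, sum_filter]
  refine Fintype.sum_equiv (Equiv.mulRight f⁻¹) _ _ fun g => ?_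
  have hswap : (f * g⁻¹).IsSwap ↔ (g * f⁻¹).IsSwap := by
    rw [← isSwap_inv_iff, mul_inv_rev, inv_inv]
  by_cases hg : (g * f⁻¹).IsSwap
  · have hfg : f ≠ g := by
      rintro rfl
      exact hg.ne_one (mul_inv_cancel f)
    simp [hg, hfg, hswap]
  · simp [hg, hswap]

section Tableau

variable {μ : YoungDiagram} (T : α ≃ μ.cells)

def row (x : α) : ℕ := (T x : ℕ × ℕ).1

def col (x : α) : ℕ := (T x : ℕ × ℕ).2

def rowGroup : Subgroup (Perm α) := fiberPreserving (row T)

def colGroup : Subgroup (Perm α) := fiberPreserving (col T)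

variable {T}

lemma eq_of_row_eq_of_col_eq {x y : α} (hr : row T x = row T y) (hc : col T x = col T y) :
    x = y :=
  T.injective (Subtype.ext (Prod.ext hr hc))

lemma mk_mem_of_le {x : α} {i j : ℕ} (hi : i ≤ row T x) (hj : j ≤ col T x) : (i, j) ∈ μ :=
  μ.up_left_mem hi hj (T x).2

lemma disjoint_rowGroup_colGroup : Disjoint (rowGroup T) (colGroup T) :=
  Subgroup.disjoint_def.mpr fun hR hC => Equiv.ext fun x => eq_of_row_eq_of_col_eq (hR x) (hC x)

lemma eq_one_or_eq_one_of_isSwap_mul [DecidableEq α] {p q : Perm α} (hp : p ∈ rowGroup T)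
    (hq : q ∈ colGroup T) (hpq : (p * q).IsSwap) : p = 1 ∨ q = 1 := by
  obtain ⟨x, y, -, hxy⟩ := hpq
  have hfix : ∀ z, z ≠ x → z ≠ y → q z = z := fun z hzx hzy => by
    have hpqz : p (q z) = z := by
      simpa [swap_apply_of_ne_of_ne hzx hzy] using congrArg (· z) hxy
    exact eq_of_row_eq_of_col_eq ((hp (q z)).symm.trans (congrArg (row T) hpqz)) (hq z)
  rcases eq_one_or_eq_swap_of_apply_eq_self hfix with hq1 | hqxy
  · exact Or.inr hq1
  · exact Or.inl (by simpa [hqxy] using hxy)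

variable [Fintype α]

lemma card_filter_eq (P : ℕ × ℕ → Prop) [DecidablePred P] :
    #{x | P (T x)} = #{c ∈ μ.cells | P c} := by
  refine card_nbij (fun x => (T x : ℕ × ℕ)) (fun x hx => ?_) (fun x _ y _ h => ?_) (fun c hc => ?_)
  · exact mem_filter.mpr ⟨(T x).2, (mem_filter.mp hx).2⟩
  · exact T.injective (Subtype.ext h)
  · obtain ⟨hc, hPc⟩ := mem_filter.mp hc
    exact ⟨T.symm ⟨c, hc⟩, by simpa using hPc, by simp⟩

lemma card_filter_row_eq (i : ℕ) : #{x : α | row T x = i} = μ.rowLen i := by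
  rw [μ.rowLen_eq_card, YoungDiagram.row]
  exact card_filter_eq (fun c => c.1 = i)

lemma card_filter_col_eq (j : ℕ) : #{x : α | col T x = j} = μ.colLen j := by
  rw [μ.colLen_eq_card, YoungDiagram.col]
  exact card_filter_eq (fun c => c.2 = j)

/- Strong induction on the row `i`. If some `x` in row `i` had `colLen (k x) ≤ i`, the fibre of
`k x` would contain `x` and, by induction, a point of each of the rows `< colLen (k x)`: too many
points. So `k` maps row `i` injectively into `range (rowLen i)`, hence onto it. -/
lemma mk_row_mem_of_injOn_rows {k : α → ℕ} (hfiber : ∀ j, #{x | k x = j} = μ.colLen j)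
    (hk : ∀ x y, row T x = row T y → k x = k y → x = y) (x : α) : (row T x, k x) ∈ μ := by
  have hrow (i : ℕ) (hi : ∀ x, row T x = i → i < μ.colLen (k x)) (j : ℕ)
      (hj : i < μ.colLen j) : ∃ x, row T x = i ∧ k x = j := by
    have himage : image k {x | row T x = i} = range (μ.rowLen i) := by
      refine eq_of_subset_of_card_le (fun j hj => ?_) ?_
      · obtain ⟨x, hx, rfl⟩ := mem_image.mp hj
        rw [mem_range, ← YoungDiagram.mem_iff_lt_rowLen, YoungDiagram.mem_iff_lt_colLen]
        exact hi x (mem_filter.mp hx).2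
      · rw [card_range, card_image_of_injOn fun x hx y hy => hk x y
          (((mem_filter.mp hx).2).trans (mem_filter.mp hy).2.symm), card_filter_row_eq]
    have hj' : j ∈ image k {x | row T x = i} := by
      rw [himage, mem_range, ← YoungDiagram.mem_iff_lt_rowLen]
      exact YoungDiagram.mem_iff_lt_colLen.mpr hj
    simpa using hj'
  have hcol (i : ℕ) : ∀ x, row T x = i → i < μ.colLen (k x) := by
    induction i using Nat.strong_induction_on with
    | _ i ih =>
    intro x hx
    by_contra! hle
    have himage : image (row T) {y | k y = k x} = range (μ.colLen (k x)) := by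
      refine (eq_of_subset_of_card_le (fun i' hi' => ?_) ?_).symm
      · rw [mem_range] at hi'
        obtain ⟨y, hy, hyx⟩ := hrow i' (ih i' (hi'.trans_le hle)) (k x) hi'
        exact mem_image.mpr ⟨y, by simpa using hyx, hy⟩
      · rw [card_range, ← hfiber]
        exact card_image_le
    have hx' : row T x ∈ image (row T) {y | k y = k x} := mem_image_of_mem _ (by simp)
    rw [himage, mem_range, hx] at hx'
    omega
  exact YoungDiagram.mem_iff_lt_colLen.mpr (hcol _ x rfl)

theorem mem_rowGroup_mul_colGroup {g : Perm α}
    (hg : ∀ x y, row T x = row T y → col T (g⁻¹ x) = col T (g⁻¹ y) → x = y) :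
    g ∈ (rowGroup T : Set (Perm α)) * (colGroup T : Set (Perm α)) := by
  have hfiber (j : ℕ) : #{x | col T (g⁻¹ x) = j} = μ.colLen j := by
    rw [← card_filter_col_eq (T := T)]
    exact card_equiv g⁻¹ fun x => by simp
  set φ : α → α := fun x => T.symm ⟨_, mk_row_mem_of_injOn_rows hfiber hg x⟩ with hφ
  have hφrow (x : α) : row T (φ x) = row T x := by simp [hφ, row]
  have hφcol (x : α) : col T (φ x) = col T (g⁻¹ x) := by simp [hφ, col]
  have hφinj : Function.Injective φ := fun x y h =>
    hg x y ((hφrow x).symm.trans ((congrArg (row T) h).trans (hφrow y)))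
      ((hφcol x).symm.trans ((congrArg (col T) h).trans (hφcol y)))
  set p := Equiv.ofBijective φ (Finite.injective_iff_bijective.mp hφinj)
  refine Set.mem_mul.mpr ⟨p⁻¹, inv_mem hφrow, p * g, fun x => ?_, by group⟩
  change col T (φ (g x)) = col T x
  simpa using hφcol (g x)

variable [DecidableEq α]

theorem exists_swap_mul_eq_mul_swap {g : Perm α}
    (hg : g ∉ (rowGroup T : Set (Perm α)) * (colGroup T : Set (Perm α))) :
    ∃ σ ∈ rowGroup T, ∃ τ ∈ colGroup T, τ.IsSwap ∧ σ * g = g * τ := by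
  obtain ⟨x, y, hrow, hcol, hxy⟩ : ∃ x y, row T x = row T y ∧ col T (g⁻¹ x) = col T (g⁻¹ y) ∧
      x ≠ y := by
    by_contra! h
    exact hg (mem_rowGroup_mul_colGroup h)
  exact ⟨swap x y, swap_mem_fiberPreserving hrow, swap (g⁻¹ x) (g⁻¹ y),
    swap_mem_fiberPreserving hcol, ⟨_, _, g⁻¹.injective.ne hxy, rfl⟩, swap_mul_eq_mul_swap g x y⟩

open Classical in
lemma card_isSwap_mem_rowGroup : #{τ : Perm α | τ.IsSwap ∧ τ ∈ rowGroup T} = ∑ x, col T x :=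
  card_isSwap_mem_fiberPreserving (fun _ _ => eq_of_row_eq_of_col_eq) fun x j hj =>
    ⟨T.symm ⟨(row T x, j), mk_mem_of_le le_rfl hj.le⟩, by simp [row, col]⟩

open Classical in
lemma card_isSwap_mem_colGroup : #{τ : Perm α | τ.IsSwap ∧ τ ∈ colGroup T} = ∑ x, row T x :=
  card_isSwap_mem_fiberPreserving (fun _ _ h h' => eq_of_row_eq_of_col_eq h' h) fun x i hi =>
    ⟨T.symm ⟨(i, col T x), mk_mem_of_le hi.le le_rfl⟩, by simp [row, col]⟩

theorem transpositionSum_youngSymmetrizer_rowGroup_colGroup :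
    transpositionSum (youngSymmetrizer (rowGroup T) (colGroup T)) =
      ((∑ x, (col T x : ℝ)) - ∑ x, (row T x : ℝ)) • youngSymmetrizer (rowGroup T) (colGroup T) := by
  rw [transpositionSum_youngSymmetrizer disjoint_rowGroup_colGroup
      fun _ => exists_swap_mul_eq_mul_swap,
    transpositionSum_youngSymmetrizer_one disjoint_rowGroup_colGroup
      fun _ hp _ => eq_one_or_eq_one_of_isSwap_mul hp,
    card_isSwap_mem_rowGroup, card_isSwap_mem_colGroup]
  push_cast
  rfl

end Tableau

end TranspositionGraph

lemma Finset.sum_range_natCast_eq_choose_two (n : ℕ) :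
    ∑ i ∈ range n, (i : ℤ) = (n.choose 2 : ℕ) := by
  rw [← Nat.cast_sum, sum_range_id, Nat.choose_two_right]

lemma StrictAnti.antitone_val_add {d : ℕ} {q : Fin d → ℕ} (hq : StrictAnti q) :
    Antitone fun k : Fin d => (k : ℕ) + q k := by
  cases d with
  | zero => exact fun i => i.elim0
  | succ d =>
    refine Fin.antitone_iff_succ_le.mpr fun i => ?_
    have := hq (Fin.castSucc_lt_succ (i := i))
    simp only [Fin.val_succ, Fin.val_castSucc]
    omega

namespace YoungDiagram

def contentSum (μ : YoungDiagram) : ℤ := ∑ c ∈ μ.cells, ((c.2 : ℤ) - c.1)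

def hook (k q p : ℕ) : Finset (ℕ × ℕ) :=
  ({k} ×ˢ Ico k (k + q + 1)).disjUnion (Ico (k + 1) (k + p + 1) ×ˢ {k}) <|
    disjoint_left.mpr fun c hc hc' => by
      simp only [mem_product, mem_singleton, mem_Ico] at hc hc'
      omega

lemma mem_hook {k q p : ℕ} {c : ℕ × ℕ} :
    c ∈ hook k q p ↔ (c.1 = k ∧ k ≤ c.2 ∧ c.2 ≤ k + q) ∨ (c.2 = k ∧ k < c.1 ∧ c.1 ≤ k + p) := by
  simp only [hook, mem_disjUnion, mem_product, mem_singleton, mem_Ico]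
  omega

lemma disjoint_hook {k k' q q' p p' : ℕ} (h : k ≠ k') : Disjoint (hook k q p) (hook k' q' p') :=
  disjoint_left.mpr fun c hc hc' => by
    rw [mem_hook] at hc hc'
    omega

lemma card_hook (k q p : ℕ) : #(hook k q p) = q + 1 + p := by
  simp only [hook, card_disjUnion, card_product, card_singleton, Nat.card_Ico]
  omega

lemma sum_content_hook (k q p : ℕ) :
    ∑ c ∈ hook k q p, ((c.2 : ℤ) - c.1) = ((q + 1).choose 2 : ℕ) - ((p + 1).choose 2 : ℕ) := by
  simp only [hook, sum_disjUnion, sum_product, sum_singleton, sum_Ico_eq_sum_range]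
  rw [show k + q + 1 - k = q + 1 by omega, show k + p + 1 - (k + 1) = p by omega,
    ← sum_range_natCast_eq_choose_two, ← sum_range_natCast_eq_choose_two, sum_range_succ' _ p]
  push_cast
  simp only [add_sub_cancel_left, sum_neg_distrib,
    show ∀ x : ℤ, (k : ℤ) - (k + 1 + x) = -(x + 1) from fun x => by ring]
  ring

/-- The diagram with Frobenius coordinates `(q | p)`: arm lengths `q k`, leg lengths `p k`. -/
def frobenius {d : ℕ} (q p : Fin d → ℕ) (hq : StrictAnti q) (hp : StrictAnti p) :
    YoungDiagram where
  cells := univ.biUnion fun k : Fin d => hook k (q k) (p k)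
  isLowerSet c c' hle hc := by
    obtain ⟨k, -, hk⟩ := mem_biUnion.mp hc
    rw [mem_hook] at hk
    obtain ⟨hle1, hle2⟩ := Prod.mk_le_mk.mp hle
    let k' : Fin d := ⟨min c'.1 c'.2, by omega⟩
    have hk' : (k' : ℕ) = min c'.1 c'.2 := rfl
    have harm : (k : ℕ) + q k ≤ k' + q k' := hq.antitone_val_add (show k' ≤ k by omega)
    have hleg : (k : ℕ) + p k ≤ k' + p k' := hp.antitone_val_add (show k' ≤ k by omega)
    exact mem_biUnion.mpr ⟨k', mem_univ _, mem_hook.mpr (by omega)⟩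

lemma pairwiseDisjoint_hook {d : ℕ} (q p : Fin d → ℕ) :
    ((univ : Finset (Fin d)) : Set (Fin d)).PairwiseDisjoint fun k => hook k (q k) (p k) :=
  fun _ _ _ _ h => disjoint_hook (Fin.val_injective.ne h)

lemma card_cells_frobenius {d : ℕ} (q p : Fin d → ℕ) (hq : StrictAnti q) (hp : StrictAnti p) :
    #(frobenius q p hq hp).cells = ∑ k, (q k + 1 + p k) := by
  simp only [frobenius, card_biUnion (pairwiseDisjoint_hook q p), card_hook]

lemma contentSum_frobenius {d : ℕ} (q p : Fin d → ℕ) (hq : StrictAnti q) (hp : StrictAnti p) :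
    (frobenius q p hq hp).contentSum =
      ∑ k, (((q k + 1).choose 2 : ℕ) - ((p k + 1).choose 2 : ℕ) : ℤ) := by
  simp only [contentSum, frobenius, sum_biUnion (pairwiseDisjoint_hook q p), sum_content_hook]

end YoungDiagram

namespace TranspositionGraph

theorem isTranspositionGraphEigenvalue_contentSum (μ : YoungDiagram) :
    IsTranspositionGraphEigenvalue #μ.cells μ.contentSum := by
  set T : Fin #μ.cells ≃ μ.cells := (Fintype.equivFinOfCardEq (Fintype.card_coe μ.cells)).symm
  refine ⟨youngSymmetrizer (rowGroup T) (colGroup T), fun h => ?_, ?_⟩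
  · simpa [youngSymmetrizer_one disjoint_rowGroup_colGroup] using congrFun h 1
  rw [transpositionGraphAdjMatrix_mulVec, transpositionSum_youngSymmetrizer_rowGroup_colGroup,
    YoungDiagram.contentSum, ← sum_coe_sort μ.cells, ← T.sum_comp, ← sum_sub_distrib]
  push_cast
  rfl

theorem isTranspositionGraphEigenvalue_frobenius {d n : ℕ} (q p : Fin d → ℕ)
    (hq : StrictAnti q) (hp : StrictAnti p) (hn : ∑ k, (q k + 1 + p k) = n) :
    IsTranspositionGraphEigenvalue n
      (∑ k, (((q k + 1).choose 2 : ℕ) - ((p k + 1).choose 2 : ℕ) : ℤ)) := by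
  rw [← hn, ← YoungDiagram.card_cells_frobenius q p hq hp,
    ← YoungDiagram.contentSum_frobenius q p hq hp]
  exact isTranspositionGraphEigenvalue_contentSum _

end TranspositionGraph

theorem stmt9_general (n a : ℕ)
    (ha2 : a ≤ (n - 11) / 3) (hpar : (n - a) % 2 = 1)
    (b : ℕ) (hb : b = (n - 3 * a - 1) / 2)
    (c : ℕ) (hc1 : b + 2 ≤ c) (hc2 : c ≤ a - 2) :
    IsTranspositionGraphEigenvalue n (((a.choose 2 : ℕ) : ℤ) - c) := by
  obtain ⟨hn, hb5⟩ : n = 3 * a + 2 * b + 1 ∧ 5 ≤ b := by omega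
  obtain ⟨a, rfl⟩ : ∃ a', a = a' + 1 := ⟨a - 1, by omega⟩
  obtain ⟨c, rfl⟩ : ∃ c', c = c' + 4 := ⟨c - 4, by omega⟩
  -- In the original `a` and `c`, the Frobenius coordinates are
  -- `(a-1, a+b-c, c-4, 2 | a+b-c, c-3, 3, 0)` when `2c ≤ a+b+2`, and
  -- `(a-1, c-2, a+b-c, 0 | c-1, a+b-c, 1, 0)` otherwise.
  rcases le_or_gt (2 * c) (a + b - 5) with h | h
  · convert TranspositionGraph.isTranspositionGraphEigenvalue_frobenius (n := n)
      ![a, a + b - c - 3, c, 2] ![a + b - c - 3, c + 1, 3, 0]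
      (Fin.strictAnti_iff_succ_lt.mpr fun i => by fin_cases i <;> simp <;> omega)
      (Fin.strictAnti_iff_succ_lt.mpr fun i => by fin_cases i <;> simp <;> omega)
      (by simp [Fin.sum_univ_four]; omega) using 1
    simp [Fin.sum_univ_four, Nat.choose_succ_succ']
    ring
  · convert TranspositionGraph.isTranspositionGraphEigenvalue_frobenius (n := n)
      ![a, c + 2, a + b - c - 3, 0] ![c + 3, a + b - c - 3, 1, 0]
      (Fin.strictAnti_iff_succ_lt.mpr fun i => by fin_cases i <;> simp <;> omega)
      (Fin.strictAnti_iff_succ_lt.mpr fun i => by fin_cases i <;> simp <;> omega)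
      (by simp [Fin.sum_univ_four]; omega) using 1
    simp [Fin.sum_univ_four, Nat.choose_succ_succ']
    ring

theorem stmt9 (n a : ℕ) (hn : 45 ≤ n) (ha1 : (n + 7) ⌈/⌉ 5 ≤ a)
    (ha2 : a ≤ (n - 11) / 3) (hpar : (n - a) % 2 = 1)
    (b : ℕ) (hb : b = (n - 3 * a - 1) / 2)
    (c : ℕ) (hc1 : b + 2 ≤ c) (hc2 : c ≤ a - 2) :
    IsTranspositionGraphEigenvalue n (((a.choose 2 : ℕ) : ℤ) - c) :=
  stmt9_general n a ha2 hpar b hb c hc1 hc2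
end

section
/- Let n ≥ 27 be an integer. For each integer a with 3 ≤ a ≤ ⌊(n+4)/5⌋ and n − a ≡ 0 (mod 2), every integer m with (a−1 choose 2) + 1 ≤ m ≤ (a choose 2) is an eigenvalue of the transposition graph Cay(S_n, T_n), where (k choose 2) = k(k−1)/2. -/
/-!
For a Young diagram `μ` with row group `R` and column group `C`, the Young symmetrizer
`e = ∑_{p ∈ R, q ∈ C} sign q • p q` spans the functions `y` on permutations with
`y (p g q) = sign q * y g` for `p ∈ R`, `q ∈ C` (von Neumann's lemma: if `g ∉ R C`, some
transposition `u ∈ R` has `g⁻¹ u g ∈ C`, forcing `y g = -y g`). Left convolution with the sum of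
all transpositions, i.e. the adjacency operator of `Cay(S_n, T_n)`, commutes with both
translations, so it preserves that line and `e` is an eigenvector. Evaluating at `1`, its
eigenvalue is `#(transpositions in R) - #(transpositions in C) = ∑_{(i, j) ∈ μ} (j - i)`, the
content of `μ`. The required eigenvalues are contents of the diagrams
`(h, y, z, w, 2^k, 1^(h-4-k))`, where `h` only adjusts the size: the first row and the first
column both have length `h`, and their contributions cancel.
-/

open Equiv Finset

namespace Equiv.Perm

variable {α β : Type*}

instance [Fintype α] [DecidableEq α] : DecidablePred (IsSwap : Perm α → Prop) :=
  fun _ => decidable_of_iff _ card_support_eq_two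

theorem IsSwap.permCongr [DecidableEq α] [DecidableEq β] {t : Perm α} (ht : t.IsSwap)
    (e : α ≃ β) : (e.permCongr t).IsSwap := by
  obtain ⟨x, y, hxy, rfl⟩ := ht
  exact ⟨e x, e y, e.injective.ne hxy, symm_trans_swap_trans x y e⟩

theorem isSwap_permCongr_iff [DecidableEq α] [DecidableEq β] {t : Perm α} (e : α ≃ β) :
    (e.permCongr t).IsSwap ↔ t.IsSwap :=
  ⟨fun h => by simpa only [← permCongr_symm, symm_apply_apply] using h.permCongr e.symm,
    fun h => h.permCongr e⟩

theorem IsSwap.inv [DecidableEq α] {t : Perm α} (ht : t.IsSwap) : t⁻¹.IsSwap := by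
  obtain ⟨x, y, hxy, rfl⟩ := ht
  exact ⟨x, y, hxy, swap_inv x y⟩

theorem IsSwap.ne_one_s16 [DecidableEq α] {t : Perm α} (ht : t.IsSwap) : t ≠ 1 := by
  obtain ⟨x, y, hxy, rfl⟩ := ht
  exact mt swap_eq_one_iff.mp hxy

theorem eq_one_of_forall_ne_apply_eq {σ : Perm α} {y : α} (h : ∀ z, z ≠ y → σ z = z) :
    σ = 1 := by
  ext z
  rcases eq_or_ne z y with rfl | hz
  · by_contra hne
    exact hne (σ.injective (h _ hne))
  · exact h z hz

def fiberSubgroup (f : α → β) : Subgroup (Perm α) where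
  carrier := {σ | ∀ x, f (σ x) = f x}
  one_mem' _ := rfl
  mul_mem' hσ hτ x := (hσ _).trans (hτ x)
  inv_mem' {σ} hσ x := by simpa using (hσ (σ⁻¹ x)).symm

theorem mem_fiberSubgroup {f : α → β} {σ : Perm α} :
    σ ∈ fiberSubgroup f ↔ ∀ x, f (σ x) = f x :=
  Iff.rfl

instance [Fintype α] [DecidableEq β] (f : α → β) : DecidablePred (· ∈ fiberSubgroup f) :=
  fun _ => decidable_of_iff _ mem_fiberSubgroup.symm

theorem swap_mem_fiberSubgroup_iff [DecidableEq α] {f : α → β} {x y : α} :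
    swap x y ∈ fiberSubgroup f ↔ f x = f y := by
  refine ⟨fun h => by simpa using (h x).symm, fun h z => ?_⟩
  rw [swap_apply_def]
  split_ifs with hx hy <;> simp [*]

theorem sum_isSwap_eq_sum_lt [Fintype α] [DecidableEq α] [LinearOrder β] {M : Type*}
    [AddCommMonoid M] {k : α → β} (hk : Function.Injective k) (F : Perm α → M) :
    ∑ t ∈ univ.filter IsSwap, F t =
      ∑ p ∈ univ.filter (fun p : α × α => k p.1 < k p.2), F (swap p.1 p.2) := by
  refine (sum_bij (fun p _ => swap p.1 p.2) ?_ ?_ ?_ fun _ _ => rfl).symm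
  · rintro ⟨x, y⟩ h
    simp only [mem_filter, mem_univ, true_and] at h ⊢
    exact ⟨x, y, ne_of_apply_ne k h.ne, rfl⟩
  · rintro ⟨x, y⟩ hxy ⟨x', y'⟩ hxy' he
    simp only [mem_filter, mem_univ, true_and] at hxy hxy' he
    have hx := congrArg (· x) he
    have hy := congrArg (· y) he
    simp only [swap_apply_left, swap_apply_right, swap_apply_def] at hx hy
    split_ifs at hx hy <;> subst_vars <;> simp_all [lt_asymm]
  · rintro t ht
    obtain ⟨x, y, hxy, rfl⟩ := (mem_filter.mp ht).2
    rcases (hk.ne hxy).lt_or_gt with h | h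
    · exact ⟨(x, y), by simpa using h, rfl⟩
    · exact ⟨(y, x), by simpa using h, swap_comm y x⟩

end Equiv.Perm

theorem Finset.sum_range_card_le_sum (s : Finset ℕ) : ∑ i ∈ range #s, i ≤ ∑ i ∈ s, i := by
  induction s using Finset.induction_on_max with
  | empty => simp
  | insert a s ha ih =>
    have hcard : #s ≤ a := by
      simpa using card_le_card (show s ⊆ range a from fun x hx => mem_range.mpr (ha x hx))
    rw [card_insert_of_notMem (fun h => (ha a h).false), sum_range_succ,
      sum_insert (fun h => (ha a h).false)]
    omega

theorem Finset.sum_range_card_lt_sum {s : Finset ℕ} {a : ℕ} (ha : a ∈ s) (hcard : #s ≤ a) :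
    ∑ i ∈ range #s, i < ∑ i ∈ s, i := by
  have hpos : 0 < #s := card_pos.mpr ⟨a, ha⟩
  have h := (s.erase a).sum_range_card_le_sum
  rw [card_erase_of_mem ha] at h
  rw [← add_sum_erase s _ ha, ← Nat.sub_one_add_one hpos.ne', sum_range_succ]
  omega

theorem Finset.sum_range_card_le_sum_of_injOn {ι : Type*} {s : Finset ι} {f : ι → ℕ}
    (hf : Set.InjOn f s) : ∑ i ∈ range #s, i ≤ ∑ x ∈ s, f x := by
  simpa [card_image_of_injOn hf, sum_image hf] using (s.image f).sum_range_card_le_sum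

theorem Finset.sum_range_card_lt_sum_of_injOn {ι : Type*} [DecidableEq ι] {s : Finset ι}
    {f : ι → ℕ} (hf : Set.InjOn f s) {x : ι} (hx : x ∈ s) (hcard : #s ≤ f x) :
    ∑ i ∈ range #s, i < ∑ x ∈ s, f x := by
  have h := sum_range_card_lt_sum (mem_image_of_mem f hx) ((card_image_of_injOn hf).trans_le hcard)
  rwa [card_image_of_injOn hf, sum_image hf] at h

theorem Finset.sum_Ico_intCast_mul_two {a b : ℕ} (hab : a ≤ b) :
    (∑ i ∈ Ico a b, (i : ℤ)) * 2 = b * (b - 1) - a * (a - 1) := by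
  have gauss : ∀ n : ℕ, (∑ i ∈ range n, (i : ℤ)) * 2 = n * (n - 1) := fun n => by
    induction n with
    | zero => simp
    | succ n ih =>
      rw [sum_range_succ, add_mul, ih]
      push_cast
      ring
  rw [sum_Ico_eq_sub _ hab, sub_mul, gauss, gauss]

section SwapSum

variable {α β M : Type*} [Fintype α] [DecidableEq α] [Fintype β] [DecidableEq β]
  [AddCommMonoid M]

def swapSum (v : Perm α → M) (g : Perm α) : M :=
  ∑ t ∈ univ.filter Perm.IsSwap, v (t * g)

theorem swapSum_permCongr (e : α ≃ β) (v : Perm β → M) (g : Perm α) :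
    swapSum (v ∘ e.permCongr) g = swapSum v (e.permCongr g) :=
  sum_equiv e.permCongr (by simp [Perm.isSwap_permCongr_iff])
    fun t _ => by simp [permCongr_mul]

theorem swapSum_mul_mul (v : Perm α → M) (p g q : Perm α) :
    swapSum v (p * g * q) = swapSum (fun h => v (p * h * q)) g := by
  unfold swapSum
  refine (sum_equiv p.permCongr (fun t => ?_) fun t _ => ?_).symm
  · simp only [mem_filter, mem_univ, true_and, Perm.isSwap_permCongr_iff]
  · show v _ = v _
    congr 1
    ext x
    simp

theorem transpositionGraphAdjMatrix_mulVec (n : ℕ) (v : Perm (Fin n) → ℝ) :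
    (transpositionGraphAdjMatrix n).mulVec v = swapSum v := by
  ext f
  simp only [Matrix.mulVec, dotProduct, transpositionGraphAdjMatrix, ite_mul, one_mul, zero_mul,
    swapSum, sum_filter]
  rw [← Equiv.sum_comp (Equiv.mulRight f)]
  refine sum_congr rfl fun t _ => ?_
  simp only [coe_mulRight, mul_inv_rev, mul_inv_cancel_left]
  by_cases ht : t.IsSwap
  · rw [if_pos ⟨fun h => ht.ne_one_s16 (mul_eq_right.mp h.symm), ht.inv⟩, if_pos ht]
  · rw [if_neg fun h => ht (by simpa using h.2.inv), if_neg ht]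

end SwapSum

theorem isTranspositionGraphEigenvalue_of_swapSum_eq {α : Type*} [Fintype α] [DecidableEq α]
    {n : ℕ} (e : α ≃ Fin n) {v : Perm α → ℝ} (hv : v ≠ 0) {m : ℤ}
    (h : swapSum v = (m : ℝ) • v) : IsTranspositionGraphEigenvalue n m := by
  refine ⟨v ∘ e.symm.permCongr, fun h0 => hv ?_, ?_⟩
  · ext g
    simpa [← permCongr_symm] using congrFun h0 (e.permCongr g)
  · ext f
    rw [transpositionGraphAdjMatrix_mulVec, swapSum_permCongr, h]
    rfl

namespace YoungDiagram

variable (μ : YoungDiagram)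

abbrev rowGroup : Subgroup (Perm μ.cells) := Perm.fiberSubgroup fun c => c.1.1

abbrev colGroup : Subgroup (Perm μ.cells) := Perm.fiberSubgroup fun c => c.1.2

def colSign (q : Perm μ.cells) : ℝ := if q ∈ μ.colGroup then ((Perm.sign q : ℤ) : ℝ) else 0

/-- The coefficient of `g` in `∑_{p ∈ R, q ∈ C} sign q • p * q`. -/
def youngSymmetrizer (g : Perm μ.cells) : ℝ :=
  ∑ p, if p ∈ μ.rowGroup then μ.colSign (p⁻¹ * g) else 0

def IsRowColSignInvariant (y : Perm μ.cells → ℝ) : Prop :=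
  ∀ p ∈ μ.rowGroup, ∀ q ∈ μ.colGroup, ∀ g, y (p * g * q) = ((Perm.sign q : ℤ) : ℝ) * y g

def content : ℤ := ∑ c ∈ μ.cells, ((c.2 : ℤ) - c.1)

variable {μ}

theorem eq_one_of_mem_rowGroup_of_mem_colGroup {p : Perm μ.cells} (hr : p ∈ μ.rowGroup)
    (hc : p ∈ μ.colGroup) : p = 1 :=
  Perm.ext fun z => Subtype.ext (Prod.ext (hr z) (hc z))

theorem apply_eq_of_mul_apply_eq {p q : Perm μ.cells} (hr : p ∈ μ.rowGroup)
    (hc : q ∈ μ.colGroup) {z : μ.cells} (h : (p * q) z = z) : q z = z ∧ p z = z := by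
  have hq : q z = z := Subtype.ext (Prod.ext ((hr (q z)).symm.trans (congrArg (·.1.1) h)) (hc z))
  exact ⟨hq, by rwa [Perm.mul_apply, hq] at h⟩

theorem mul_eq_swap {p q : Perm μ.cells} (hr : p ∈ μ.rowGroup) (hc : q ∈ μ.colGroup)
    {x y : μ.cells} (h : p * q = swap x y) :
    (p = swap x y ∧ q = 1) ∨ (p = 1 ∧ q = swap x y) := by
  have hfix : ∀ z, z ≠ x → z ≠ y → q z = z ∧ p z = z := fun z hx hy =>
    apply_eq_of_mul_apply_eq hr hc (by rw [h, swap_apply_of_ne_of_ne hx hy])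
  by_cases hqx : q x = x
  · have hq : q = 1 := Perm.eq_one_of_forall_ne_apply_eq (y := y) fun z hzy => by
      rcases eq_or_ne z x with rfl | hzx
      exacts [hqx, (hfix z hzx hzy).1]
    exact Or.inl ⟨by simpa [hq] using h, hq⟩
  · have hqx' : q x = y := by
      by_contra hne
      exact hqx (q.injective (hfix (q x) hqx hne).1)
    have hpy : p y = y := by rw [← hqx', ← Perm.mul_apply, h, hqx', swap_apply_left]
    have hp : p = 1 := Perm.eq_one_of_forall_ne_apply_eq (y := x) fun z hzx => by
      rcases eq_or_ne z y with rfl | hzy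
      exacts [hpy, (hfix z hzx hzy).2]
    exact Or.inr ⟨hp, by simpa [hp] using h⟩

theorem colSign_mul_of_mem {q : Perm μ.cells} (hq : q ∈ μ.colGroup) (x : Perm μ.cells) :
    μ.colSign (x * q) = μ.colSign x * ((Perm.sign q : ℤ) : ℝ) := by
  unfold colSign
  by_cases hx : x ∈ μ.colGroup
  · rw [if_pos (mul_mem hx hq), if_pos hx, map_mul]
    push_cast
    ring
  · rw [if_neg fun h => hx ((Subgroup.mul_mem_cancel_right _ hq).mp h), if_neg hx, zero_mul]

theorem isRowColSignInvariant_youngSymmetrizer :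
    μ.IsRowColSignInvariant μ.youngSymmetrizer := by
  intro p₀ hp₀ q₀ hq₀ g
  unfold youngSymmetrizer
  rw [mul_sum, ← Equiv.sum_comp (Equiv.mulLeft p₀)]
  refine sum_congr rfl fun p _ => ?_
  simp only [coe_mulLeft, Subgroup.mul_mem_cancel_left _ hp₀]
  split_ifs
  · rw [show (p₀ * p)⁻¹ * (p₀ * g * q₀) = p⁻¹ * g * q₀ by group, colSign_mul_of_mem hq₀]
    ring
  · rw [mul_zero]

theorem youngSymmetrizer_one : μ.youngSymmetrizer 1 = 1 := by
  unfold youngSymmetrizer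
  rw [Fintype.sum_eq_single 1]
  · simp [colSign]
  · intro p hp
    split_ifs with hpr
    · rw [colSign, if_neg]
      intro hpc
      exact hp (eq_one_of_mem_rowGroup_of_mem_colGroup hpr (by simpa using hpc))
    · rfl

theorem youngSymmetrizer_swap {x y : μ.cells} (hxy : x ≠ y) :
    μ.youngSymmetrizer (swap x y) =
      (if x.1.1 = y.1.1 then 1 else 0) - (if x.1.2 = y.1.2 then 1 else 0) := by
  unfold youngSymmetrizer
  rw [Fintype.sum_eq_add (swap x y) 1 (mt swap_eq_one_iff.mp hxy)]
  · simp only [rowGroup, colGroup, colSign, inv_one, inv_mul_cancel, one_mul, one_mem,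
      Perm.swap_mem_fiberSubgroup_iff, Perm.sign_swap hxy]
    split_ifs <;> simp
  · rintro p ⟨hp₁, hp₂⟩
    split_ifs with hpr
    · rw [colSign, if_neg]
      intro hpc
      rcases mul_eq_swap hpr hpc (mul_inv_cancel_left p (swap x y)) with ⟨h, -⟩ | ⟨h, -⟩
      exacts [hp₁ h, hp₂ h]
    · rfl

theorem injOn_row_colFiber (j : ℕ) :
    Set.InjOn (fun z : μ.cells => z.1.1) (univ.filter fun z : μ.cells => z.1.2 = j) :=
  fun _ hz _ hz' h => Subtype.ext (Prod.ext h
    ((mem_filter.mp hz).2.trans (mem_filter.mp hz').2.symm))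

theorem image_row_colFiber (j : ℕ) :
    (univ.filter fun z : μ.cells => z.1.2 = j).image (fun z => z.1.1) = range (μ.colLen j) := by
  ext i
  simp only [mem_image, mem_filter, mem_univ, true_and, mem_range]
  constructor
  · rintro ⟨z, rfl, rfl⟩
    exact mem_iff_lt_colLen.mp z.2
  · exact fun hi => ⟨⟨(i, j), mem_iff_lt_colLen.mpr hi⟩, rfl, rfl⟩

/- Within each column the rows of the `g`-images are distinct, so they add up to at least
`0 + 1 + ⋯ + (colLen - 1)`, strictly so in a column containing a violating cell; but summed over
all columns both totals are `∑ z, z.1.1`. -/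
theorem mem_of_injective_row_col (g : Perm μ.cells)
    (hg : ∀ y y' : μ.cells, y.1.2 = y'.1.2 → (g y).1.1 = (g y').1.1 → y = y') (y : μ.cells) :
    ((g y).1.1, y.1.2) ∈ μ := by
  by_contra hy
  let F : ℕ → Finset μ.cells := fun j => univ.filter fun z => z.1.2 = j
  have hinj : ∀ j, Set.InjOn (fun z : μ.cells => (g z).1.1) (F j) := fun j z hz z' hz' h =>
    hg z z' ((mem_filter.mp hz).2.trans (mem_filter.mp hz').2.symm) h
  have hcard : ∀ j, #(F j) = μ.colLen j := fun j => by
    rw [← card_image_of_injOn (injOn_row_colFiber j), image_row_colFiber, card_range]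
  have hrow : ∀ j, ∑ z ∈ F j, z.1.1 = ∑ i ∈ range #(F j), i := fun j => by
    rw [hcard, ← image_row_colFiber, sum_image (injOn_row_colFiber j)]
  have hle : ∀ j, ∑ z ∈ F j, z.1.1 ≤ ∑ z ∈ F j, (g z).1.1 := fun j => by
    rw [hrow]
    exact sum_range_card_le_sum_of_injOn (hinj j)
  have hlt : ∑ z ∈ F y.1.2, z.1.1 < ∑ z ∈ F y.1.2, (g z).1.1 := by
    rw [hrow]
    refine sum_range_card_lt_sum_of_injOn (x := y) (hinj _) (by simp [F]) ?_
    rw [hcard]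
    exact not_lt.mp (mt mem_iff_lt_colLen.mpr hy)
  have hcols : ∀ z ∈ (univ : Finset μ.cells), z.1.2 ∈ univ.image fun z : μ.cells => z.1.2 :=
    fun z _ => mem_image_of_mem _ (mem_univ z)
  have key : ∑ z : μ.cells, z.1.1 < ∑ z, (g z).1.1 := by
    rw [← sum_fiberwise_of_maps_to hcols, ← sum_fiberwise_of_maps_to hcols]
    exact sum_lt_sum (fun j _ => hle j) ⟨y.1.2, hcols y (mem_univ y), hlt⟩
  exact key.ne (Equiv.sum_comp g fun z => z.1.1).symm

theorem exists_mul_eq_of_injective_row_col (g : Perm μ.cells)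
    (hg : ∀ y y' : μ.cells, y.1.2 = y'.1.2 → (g y).1.1 = (g y').1.1 → y = y') :
    ∃ p ∈ μ.rowGroup, ∃ q ∈ μ.colGroup, p * q = g := by
  let q₀ : μ.cells → μ.cells := fun y => ⟨((g y).1.1, y.1.2), mem_of_injective_row_col g hg y⟩
  have hq₀ : Function.Injective q₀ := fun y y' h =>
    hg y y' (congrArg (·.1.2) h) (congrArg (·.1.1) h)
  let q := Equiv.ofBijective q₀ hq₀.bijective_of_finite
  exact ⟨g * q⁻¹, fun z => congrArg (·.1.1) (q.apply_symm_apply z), q, fun _ => rfl,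
    inv_mul_cancel_right g q⟩

namespace IsRowColSignInvariant

variable {y : Perm μ.cells → ℝ}

theorem apply_mul (hy : μ.IsRowColSignInvariant y) {p q : Perm μ.cells} (hp : p ∈ μ.rowGroup)
    (hq : q ∈ μ.colGroup) : y (p * q) = ((Perm.sign q : ℤ) : ℝ) * y 1 := by
  simpa using hy p hp q hq 1

theorem apply_eq_zero (hy : μ.IsRowColSignInvariant y) {g : Perm μ.cells}
    (hg : ∀ p ∈ μ.rowGroup, ∀ q ∈ μ.colGroup, p * q ≠ g) : y g = 0 := by
  obtain ⟨z, z', hne, hcol, hrow⟩ :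
      ∃ z z' : μ.cells, z ≠ z' ∧ z.1.2 = z'.1.2 ∧ (g z).1.1 = (g z').1.1 := by
    by_contra! h
    obtain ⟨p, hp, q, hq, hpq⟩ := exists_mul_eq_of_injective_row_col g fun z z' hc hr =>
      by_contra fun hne => h z z' hne hc hr
    exact hg p hp q hq hpq
  have hfix : swap (g z) (g z') * g * swap z z' = g := by
    rw [swap_apply_apply, inv_mul_cancel_right, mul_assoc, swap_mul_self, mul_one]
  have h := hy _ (Perm.swap_mem_fiberSubgroup_iff.mpr hrow) _
    (Perm.swap_mem_fiberSubgroup_iff.mpr hcol) g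
  rw [hfix, Perm.sign_swap hne] at h
  push_cast at h
  linarith

theorem eq_smul_youngSymmetrizer (hy : μ.IsRowColSignInvariant y) :
    y = y 1 • μ.youngSymmetrizer := by
  ext g
  rw [Pi.smul_apply, smul_eq_mul]
  by_cases hg : ∃ p ∈ μ.rowGroup, ∃ q ∈ μ.colGroup, p * q = g
  · obtain ⟨p, hp, q, hq, rfl⟩ := hg
    rw [hy.apply_mul hp hq, isRowColSignInvariant_youngSymmetrizer.apply_mul hp hq,
      youngSymmetrizer_one]
    ring
  · push Not at hg
    rw [hy.apply_eq_zero hg, isRowColSignInvariant_youngSymmetrizer.apply_eq_zero hg, mul_zero]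

theorem swapSum (hy : μ.IsRowColSignInvariant y) : μ.IsRowColSignInvariant (swapSum y) := by
  intro p hp q hq g
  rw [swapSum_mul_mul, _root_.swapSum, _root_.swapSum, mul_sum]
  exact sum_congr rfl fun t _ => hy p hp q hq (t * g)

end IsRowColSignInvariant

theorem card_filter_toLex_lt_of_fst_eq (y : μ.cells) :
    #(univ.filter fun x : μ.cells => toLex x.1 < toLex y.1 ∧ x.1.1 = y.1.1) = y.1.2 := by
  refine (card_bij (fun x _ => x.1.2) (fun x hx => ?_) (fun x hx x' hx' h => ?_)
    fun j hj => ?_).trans (card_range _)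
  · simp only [mem_filter, mem_univ, true_and, Prod.Lex.toLex_lt_toLex] at hx
    simp only [mem_range]
    omega
  · exact Subtype.ext (Prod.ext ((mem_filter.mp hx).2.2.trans (mem_filter.mp hx').2.2.symm) h)
  · have hj' := mem_range.mp hj
    exact ⟨⟨(y.1.1, j), μ.up_left_mem le_rfl hj'.le y.2⟩,
      by simp [Prod.Lex.toLex_lt_toLex, hj'], rfl⟩

theorem card_filter_toLex_lt_of_snd_eq (y : μ.cells) :
    #(univ.filter fun x : μ.cells => toLex x.1 < toLex y.1 ∧ x.1.2 = y.1.2) = y.1.1 := by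
  refine (card_bij (fun x _ => x.1.1) (fun x hx => ?_) (fun x hx x' hx' h => ?_)
    fun i hi => ?_).trans (card_range _)
  · simp only [mem_filter, mem_univ, true_and, Prod.Lex.toLex_lt_toLex] at hx
    simp only [mem_range]
    omega
  · exact Subtype.ext (Prod.ext h ((mem_filter.mp hx).2.2.trans (mem_filter.mp hx').2.2.symm))
  · have hi' := mem_range.mp hi
    exact ⟨⟨(i, y.1.2), μ.up_left_mem hi'.le le_rfl y.2⟩,
      by simp [Prod.Lex.toLex_lt_toLex, hi'], rfl⟩

theorem sum_isSwap_youngSymmetrizer :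
    ∑ t ∈ univ.filter Perm.IsSwap, μ.youngSymmetrizer t = μ.content := by
  have hk : Function.Injective fun c : μ.cells => toLex c.1 :=
    toLex.injective.comp Subtype.val_injective
  rw [Perm.sum_isSwap_eq_sum_lt hk, sum_filter, Fintype.sum_prod_type, sum_comm, content,
    ← sum_coe_sort μ.cells]
  push_cast
  refine sum_congr rfl fun y _ => ?_
  calc ∑ x : μ.cells, (if toLex x.1 < toLex y.1 then μ.youngSymmetrizer (swap x y) else 0)
      = ∑ x : μ.cells, ((if toLex x.1 < toLex y.1 ∧ x.1.1 = y.1.1 then 1 else 0)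
          - (if toLex x.1 < toLex y.1 ∧ x.1.2 = y.1.2 then 1 else 0)) := by
        refine sum_congr rfl fun x _ => ?_
        by_cases hxy : toLex x.1 < toLex y.1
        · rw [if_pos hxy, youngSymmetrizer_swap (ne_of_apply_ne (fun c : μ.cells => toLex c.1)
            hxy.ne)]
          simp [hxy]
        · simp [hxy]
    _ = (y.1.2 : ℝ) - y.1.1 := by
        rw [sum_sub_distrib, sum_boole, sum_boole, card_filter_toLex_lt_of_fst_eq,
          card_filter_toLex_lt_of_snd_eq]

theorem swapSum_youngSymmetrizer :
    swapSum μ.youngSymmetrizer = (μ.content : ℝ) • μ.youngSymmetrizer := by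
  rw [isRowColSignInvariant_youngSymmetrizer.swapSum.eq_smul_youngSymmetrizer]
  congr 1
  simpa only [swapSum, mul_one] using sum_isSwap_youngSymmetrizer

theorem isTranspositionGraphEigenvalue_content {n : ℕ} (hn : #μ.cells = n) :
    IsTranspositionGraphEigenvalue n μ.content :=
  isTranspositionGraphEigenvalue_of_swapSum_eq (Fintype.equivFinOfCardEq (by simpa using hn))
    (fun h => by simpa [youngSymmetrizer_one] using congrFun h 1) swapSum_youngSymmetrizer

def ofAntitone (r : ℕ → ℕ) (hr : Antitone r) (N : ℕ) : YoungDiagram where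
  cells := (range N ×ˢ range (r 0)).filter fun c => c.2 < r c.1
  isLowerSet c d hdc hc := by
    simp only [coe_filter, mem_product, mem_range, Set.mem_ofPred_eq] at hc ⊢
    have hd : d.2 < r d.1 := (hdc.2.trans_lt hc.2).trans_le (hr hdc.1)
    exact ⟨⟨hdc.1.trans_lt hc.1.1, hd.trans_le (hr (Nat.zero_le _))⟩, hd⟩

section OfAntitone

variable {r : ℕ → ℕ} (hr : Antitone r) (N : ℕ)

theorem sum_cells_ofAntitone {M : Type*} [AddCommMonoid M] (f : ℕ × ℕ → M) :
    ∑ c ∈ (ofAntitone r hr N).cells, f c = ∑ i ∈ range N, ∑ j ∈ range (r i), f (i, j) :=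
  sum_finset_product _ _ _ fun c => by
    simp only [ofAntitone, mem_filter, mem_product, mem_range]
    exact ⟨fun h => ⟨h.1.1, h.2⟩, fun h => ⟨⟨h.1, h.2.trans_le (hr (Nat.zero_le _))⟩, h.2⟩⟩

theorem card_cells_ofAntitone : #(ofAntitone r hr N).cells = ∑ i ∈ range N, r i := by
  rw [card_eq_sum_ones, sum_cells_ofAntitone]
  simp

theorem two_mul_content_ofAntitone :
    2 * (ofAntitone r hr N).content =
      ∑ i ∈ range N, ((r i : ℤ) * (r i - 1) - 2 * i * r i) := by
  rw [content, sum_cells_ofAntitone, mul_sum]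
  refine sum_congr rfl fun i _ => ?_
  have gauss := Finset.sum_Ico_intCast_mul_two (Nat.zero_le (r i))
  rw [← range_eq_Ico] at gauss
  simp only [sum_sub_distrib, sum_const, card_range, nsmul_eq_mul]
  push_cast at gauss ⊢
  linarith

end OfAntitone

end YoungDiagram

/-- Row lengths of `(h, y, z, w, 2^k, 1^(h-4-k))`, used on the first `h` rows only. -/
def templateRows (h y z w k : ℕ) (i : ℕ) : ℕ :=
  if i = 0 then h else if i = 1 then y else if i = 2 then z else if i = 3 then w
  else if i < 4 + k then 2 else 1

section Template

variable {h y z w k : ℕ}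

theorem antitone_templateRows (hy : y ≤ h) (hz : z ≤ y) (hw : w ≤ z) (hw₁ : 1 ≤ w)
    (hw₂ : k = 0 ∨ 2 ≤ w) : Antitone (templateRows h y z w k) := by
  intro i j hij
  unfold templateRows
  split_ifs <;> omega

theorem sum_range_templateRows {M : Type*} [AddCommMonoid M] (F : ℕ → ℕ → M) (hk : 4 + k ≤ h) :
    ∑ i ∈ range h, F i (templateRows h y z w k i) =
      F 0 h + F 1 y + F 2 z + F 3 w + ∑ i ∈ Ico 4 (4 + k), F i 2 + ∑ i ∈ Ico (4 + k) h, F i 1 := by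
  have htwo : ∀ i ∈ Ico 4 (4 + k), templateRows h y z w k i = 2 := fun i hi => by
    rw [mem_Ico] at hi
    unfold templateRows
    split_ifs <;> omega
  have hone : ∀ i ∈ Ico (4 + k) h, templateRows h y z w k i = 1 := fun i hi => by
    rw [mem_Ico] at hi
    unfold templateRows
    split_ifs <;> omega
  rw [← sum_range_add_sum_Ico _ (by omega : 4 ≤ h),
    ← sum_Ico_consecutive _ (by omega : 4 ≤ 4 + k) hk,
    sum_congr rfl fun i hi => congrArg (F i) (htwo i hi),
    sum_congr rfl fun i hi => congrArg (F i) (hone i hi)]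
  simp [sum_range_succ, templateRows, add_assoc]

theorem isTranspositionGraphEigenvalue_template {n : ℕ} {m : ℤ} (hk : 4 + k ≤ h) (hy : y ≤ h)
    (hz : z ≤ y) (hw : w ≤ z) (hw₁ : 1 ≤ w) (hw₂ : k = 0 ∨ 2 ≤ w)
    (hn : 2 * h + y + z + w + k = n + 4)
    (hm : 2 * m = (y : ℤ) * (y - 1) + z * (z - 1) + w * (w - 1) - 2 * y - 4 * z - 6 * w
      - k * k - 5 * k + 12) :
    IsTranspositionGraphEigenvalue n m := by
  have hr := antitone_templateRows hy hz hw hw₁ hw₂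
  have hcard : #(YoungDiagram.ofAntitone _ hr h).cells = n := by
    rw [YoungDiagram.card_cells_ofAntitone, sum_range_templateRows (fun _ r => r) hk]
    simp only [sum_const, Nat.card_Ico, smul_eq_mul]
    omega
  convert (YoungDiagram.ofAntitone _ hr h).isTranspositionGraphEigenvalue_content hcard using 1
  have hcontent := YoungDiagram.two_mul_content_ofAntitone hr h
  rw [sum_range_templateRows (fun i r => (r : ℤ) * (r - 1) - 2 * i * r) hk] at hcontent
  have gauss₁ := Finset.sum_Ico_intCast_mul_two (by omega : 4 ≤ 4 + k)
  have gauss₂ := Finset.sum_Ico_intCast_mul_two hk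
  simp only [sum_sub_distrib, ← sum_mul, ← mul_sum, sum_const, Nat.card_Ico,
    add_tsub_cancel_left, nsmul_eq_mul] at hcontent
  push_cast at hcontent gauss₁ gauss₂
  have h2 : 2 * m = 2 * (YoungDiagram.ofAntitone _ hr h).content := by
    linear_combination hm - hcontent + 2 * gauss₁ + gauss₂
  omega

end Template

theorem isTranspositionGraphEigenvalue_of_two_mul_eq {n a e : ℕ} {m : ℤ} (hn : 27 ≤ n)
    (ha : 3 ≤ a) (han : 5 * a ≤ n + 4) (hpar : (n - a) % 2 = 0) (he : e + 2 ≤ a)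
    (hm : 2 * m = (a : ℤ) * (a - 1) - 2 * e) : IsTranspositionGraphEigenvalue n m := by
  rcases e with _ | _ | _ | e
  · obtain ⟨h, rfl, hh⟩ : ∃ h, n = 2 * h + a + 2 ∧ a + 1 ≤ h :=
      ⟨(n - a - 2) / 2, by omega, by omega⟩
    exact isTranspositionGraphEigenvalue_template (h := h) (y := a + 1) (z := 4) (w := 1) (k := 0)
      (by omega) (by omega) (by omega) (by omega) le_rfl (by omega) (by omega)
      (by push_cast; linear_combination hm)
  · obtain ⟨h, rfl, hh⟩ : ∃ h, n = 2 * h + a ∧ a + 1 ≤ h := ⟨(n - a) / 2, by omega, by omega⟩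
    exact isTranspositionGraphEigenvalue_template (h := h) (y := a + 1) (z := 2) (w := 1) (k := 0)
      (by omega) (by omega) (by omega) (by omega) le_rfl (by omega) (by omega)
      (by push_cast; linear_combination hm)
  · rcases (show a = 4 ∨ a = 5 ∨ 6 ≤ a by omega) with rfl | rfl | ha₆
    · obtain ⟨h, rfl, hh⟩ : ∃ h, n = 2 * h + 10 ∧ 6 ≤ h := ⟨(n - 10) / 2, by omega, by omega⟩
      exact isTranspositionGraphEigenvalue_template (h := h) (y := 6) (z := 4) (w := 3) (k := 1)
        (by omega) (by omega) (by omega) (by omega) (by omega) (by omega) (by omega)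
        (by push_cast at hm ⊢; linear_combination hm)
    · obtain ⟨h, rfl, hh⟩ : ∃ h, n = 2 * h + 7 ∧ 5 ≤ h := ⟨(n - 7) / 2, by omega, by omega⟩
      exact isTranspositionGraphEigenvalue_template (h := h) (y := 5) (z := 5) (w := 1) (k := 0)
        (by omega) (by omega) (by omega) (by omega) le_rfl (by omega) (by omega)
        (by push_cast at hm ⊢; linear_combination hm)
    · obtain ⟨h, hn', hh⟩ : ∃ h, n + 8 = 2 * h + 3 * a ∧ a ≤ h :=
        ⟨(n + 8 - 3 * a) / 2, by omega, by omega⟩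
      exact isTranspositionGraphEigenvalue_template (h := h) (y := a) (z := a) (w := 2)
        (k := a - 6) (by omega) (by omega) (by omega) (by omega) (by omega) (by omega) (by omega)
        (by push_cast [Nat.cast_sub ha₆] at hm ⊢; linear_combination hm)
  · obtain ⟨h, hn', hh⟩ : ∃ h, n + 2 = 2 * h + a + 2 * (e + 3) ∧ a + 1 ≤ h :=
      ⟨(n + 2 - a - 2 * (e + 3)) / 2, by omega, by omega⟩
    exact isTranspositionGraphEigenvalue_template (h := h) (y := a + 1) (z := e + 4) (w := 3)
      (k := e) (by omega) (by omega) (by omega) (by omega) (by omega) (by omega) (by omega)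
      (by push_cast at hm ⊢; linear_combination hm)

theorem stmt16 (n a : ℕ) (hn : 27 ≤ n) (ha1 : 3 ≤ a) (ha2 : a ≤ (n + 4) / 5)
    (hpar : (n - a) % 2 = 0) (m : ℤ)
    (hm1 : (((a - 1).choose 2 : ℕ) : ℤ) + 1 ≤ m) (hm2 : m ≤ ((a.choose 2 : ℕ) : ℤ)) :
    IsTranspositionGraphEigenvalue n m := by
  have hpascal : a.choose 2 = (a - 1).choose 2 + (a - 1) := by
    obtain ⟨b, rfl⟩ : ∃ b, a = b + 1 := ⟨a - 1, by omega⟩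
    simp [Nat.choose_succ_succ', add_comm]
  have htwo : ((a.choose 2 : ℕ) : ℤ) * 2 = a * (a - 1) := by
    qify
    rw [Nat.cast_choose_two]
    ring
  obtain ⟨e, he⟩ : ∃ e : ℕ, (e : ℤ) = (a.choose 2 : ℕ) - m :=
    ⟨_, Int.toNat_of_nonneg (by omega)⟩
  exact isTranspositionGraphEigenvalue_of_two_mul_eq (e := e) hn ha1 (by omega) hpar (by omega)
    (by linear_combination 2 * he + htwo)
end
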